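/- For every integer n ≥ 4, consider n agents and m = n + 2 items o_1,...,o_{n+2} whose conflict graph is the complete bipartite graph K_{3, n−1} with parts {o_1, o_2, o_3} and {o_4,...,o_{n+2}}. All agents share the additive valuation v with v(o) = 2 for o ∈ {o_1, o_2, o_3} and v(o) = 3 for all other items. Then no allocation (A_1,...,A_n) is both maximal and EF1. -/

import Mathlib

/-!
A bundle is independent in `K_{3,n-1}`, so it lies inside one part. If some item stays
unallocated, maximality puts in each of the `n` pairwise disjoint bundles a neighbour of it, i.e.
an item of the opposite part; but the parts have only `3` and `n - 1 < n` items.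

If every item is allocated, EF1 for the common valuation says that no bundle is worth more than
another plus its most valuable item: `3` in general, `2` for a bundle inside the small part.
If at least two agents hold items of the small part, one of them holds a single item (worth `2`)
while the `n - 1` items of the large part, shared by at most `n - 2` agents, put two items
(worth `6`) into one bundle. Otherwise one agent holds all three small items (worth `6`) while
some agent holds at most one item (worth at most `3`) of the large part.
-/

open Finset Function

section EnvyFreeness

variable {α M : Type*} [DecidableEq α] [AddCommMonoid M] [PartialOrder M] [IsOrderedAddMonoid M]

theorem Finset.sum_le_sum_sdiff_add {s S : Finset α} {w : α → M} {c : M} (hc₀ : 0 ≤ c)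
    (hc : ∀ x ∈ s, w x ≤ c) (hS : #S ≤ 1) : ∑ x ∈ s, w x ≤ ∑ x ∈ s \ S, w x + c := by
  rw [← sum_inter_add_sum_sdiff s S, add_comm]
  gcongr
  calc ∑ x ∈ s ∩ S, w x ≤ #(s ∩ S) • c :=
        sum_le_card_nsmul _ _ _ fun x hx => hc x (mem_of_mem_inter_left hx)
    _ ≤ 1 • c := nsmul_le_nsmul_left hc₀ ((card_le_card inter_subset_right).trans hS)
    _ = c := one_nsmul c

def EnvyFreeUpToOne (w : α → M) (A B : Finset α) : Prop :=
  ∃ S ⊆ A ∪ B, #S ≤ 1 ∧ ∑ o ∈ B \ S, w o ≤ ∑ o ∈ A \ S, w o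

theorem EnvyFreeUpToOne.sum_le_sum_add {w : α → M} {A B : Finset α} {c : M}
    (h : EnvyFreeUpToOne w A B) (hw : ∀ x, 0 ≤ w x) (hc₀ : 0 ≤ c) (hc : ∀ x ∈ B, w x ≤ c) :
    ∑ x ∈ B, w x ≤ ∑ x ∈ A, w x + c := by
  obtain ⟨S, -, hS, hAB⟩ := h
  calc ∑ x ∈ B, w x ≤ ∑ x ∈ B \ S, w x + c := sum_le_sum_sdiff_add hc₀ hc hS
    _ ≤ ∑ x ∈ A, w x + c := by
      grw [hAB, sum_le_sum_of_subset_of_nonneg sdiff_subset fun x _ _ => hw x]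

end EnvyFreeness

theorem Fintype.card_le_card_of_pairwise_disjoint {ι α : Type*} [Fintype ι] [DecidableEq α]
    {A : ι → Finset α} {T : Finset α} (hA : Pairwise (Disjoint on A))
    (hT : ∀ i, ∃ x ∈ A i, x ∈ T) : Fintype.card ι ≤ #T := by
  calc Fintype.card ι = #(univ : Finset ι) := card_univ.symm
    _ ≤ #(univ.biUnion fun i => A i ∩ T) :=
      card_le_card_biUnion (fun i _ j _ hij => (hA hij).mono inter_subset_left inter_subset_left)
        fun i _ => let ⟨x, hxA, hxT⟩ := hT i; ⟨x, mem_inter.2 ⟨hxA, hxT⟩⟩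
    _ ≤ #T := card_le_card (biUnion_subset.2 fun _ _ => inter_subset_right)

theorem Finset.sum_card_le_card_of_pairwise_disjoint {ι α : Type*} [DecidableEq α]
    {s : Finset ι} {A : ι → Finset α} {T : Finset α} (hA : Pairwise (Disjoint on A))
    (hT : ∀ i ∈ s, A i ⊆ T) : ∑ i ∈ s, #(A i) ≤ #T := by
  rw [← card_biUnion fun i _ j _ hij => hA hij]
  exact card_le_card (biUnion_subset.2 hT)

namespace K3Conflict

variable {m : ℕ}

def Adj (x y : Fin m) : Prop := (x.val < 3 ∧ 3 ≤ y.val) ∨ (y.val < 3 ∧ 3 ≤ x.val)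

def leftPart (m : ℕ) : Finset (Fin m) := {o | o.val < 3}

def rightPart (m : ℕ) : Finset (Fin m) := {o | 3 ≤ o.val}

def value (o : Fin m) : ℝ := if o.val < 3 then 2 else 3

theorem card_leftPart : #(leftPart m) = min m 3 := Fin.card_filter_val_lt

theorem card_rightPart : #(rightPart m) = m - 3 := by
  have h := card_filter_add_card_filter_not (s := (univ : Finset (Fin m))) fun o => o.val < 3
  simp only [not_lt, card_univ, Fintype.card_fin] at h
  have := card_leftPart (m := m)
  rw [leftPart] at this
  rw [rightPart]
  omega

theorem subset_leftPart_or_subset_rightPart {s : Finset (Fin m)}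
    (hs : ∀ x ∈ s, ∀ y ∈ s, ¬ Adj x y) : s ⊆ leftPart m ∨ s ⊆ rightPart m := by
  by_contra! h
  obtain ⟨⟨x, hx, hxL⟩, ⟨y, hy, hyR⟩⟩ := And.intro (not_subset.1 h.1) (not_subset.1 h.2)
  simp only [leftPart, rightPart, mem_filter, mem_univ, true_and, not_lt] at hxL hyR
  exact hs x hx y hy (Or.inr ⟨by omega, hxL⟩)

theorem value_nonneg (o : Fin m) : 0 ≤ value o := by
  unfold value; split_ifs <;> norm_num

theorem value_le_three (o : Fin m) : value o ≤ 3 := by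
  unfold value; split_ifs <;> norm_num

theorem value_of_mem_leftPart {o : Fin m} (ho : o ∈ leftPart m) : value o = 2 :=
  if_pos (mem_filter.1 ho).2

theorem value_of_mem_rightPart {o : Fin m} (ho : o ∈ rightPart m) : value o = 3 :=
  if_neg (not_lt.2 (mem_filter.1 ho).2)

theorem sum_value_of_subset_leftPart {s : Finset (Fin m)} (hs : s ⊆ leftPart m) :
    ∑ o ∈ s, value o = 2 * #s := by
  rw [sum_congr rfl fun o ho => value_of_mem_leftPart (hs ho), sum_const, nsmul_eq_mul,
    mul_comm]

theorem sum_value_of_subset_rightPart {s : Finset (Fin m)} (hs : s ⊆ rightPart m) :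
    ∑ o ∈ s, value o = 3 * #s := by
  rw [sum_congr rfl fun o ho => value_of_mem_rightPart (hs ho), sum_const, nsmul_eq_mul,
    mul_comm]

theorem card_le_of_forall_exists_adj {ι : Type*} [Fintype ι] {A : ι → Finset (Fin m)}
    (hA : Pairwise (Disjoint on A)) (o : Fin m) (ho : ∀ i, ∃ x ∈ A i, Adj o x) :
    Fintype.card ι ≤ max 3 (m - 3) := by
  by_cases h : o.val < 3
  · refine (Fintype.card_le_card_of_pairwise_disjoint hA fun i => ?_).trans
      (card_rightPart.trans_le (le_max_right _ _))
    obtain ⟨x, hx, hox⟩ := ho i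
    exact ⟨x, hx, mem_filter.2 ⟨mem_univ x, by unfold Adj at hox; omega⟩⟩
  · refine (Fintype.card_le_card_of_pairwise_disjoint hA fun i => ?_).trans
      (card_leftPart.trans_le ((min_le_right _ _).trans (le_max_left _ _)))
    obtain ⟨x, hx, hox⟩ := ho i
    exact ⟨x, hx, mem_filter.2 ⟨mem_univ x, by unfold Adj at hox; omega⟩⟩

theorem false_of_envyFreeUpToOne_of_allocated {n : ℕ} (hn : 2 ≤ n)
    {A : Fin n → Finset (Fin (n + 2))} (hA : Pairwise (Disjoint on A))
    (hpart : ∀ i, A i ⊆ leftPart _ ∨ A i ⊆ rightPart _) (hall : ∀ o, ∃ i, o ∈ A i)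
    (hEF : ∀ i j, EnvyFreeUpToOne value (A i) (A j)) : False := by
  set L : Finset (Fin n) := {i | A i ⊆ leftPart _}
  set R : Finset (Fin n) := {i | ¬ A i ⊆ leftPart _}
  have hR_sub : ∀ i ∈ R, A i ⊆ rightPart _ := fun i hi => (hpart i).resolve_left (mem_filter.1 hi).2
  have hL_sum : ∑ i ∈ L, #(A i) ≤ 3 :=
    (sum_card_le_card_of_pairwise_disjoint hA fun i hi => (mem_filter.1 hi).2).trans
      (card_leftPart.trans_le (min_le_right _ _))
  have hR_sum : ∑ i ∈ R, #(A i) ≤ n - 1 :=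
    (sum_card_le_card_of_pairwise_disjoint hA hR_sub).trans card_rightPart.le
  have htot : ∑ i ∈ L, #(A i) + ∑ i ∈ R, #(A i) = n + 2 := by
    rw [sum_filter_add_sum_filter_not, ← card_biUnion fun i _ j _ hij => hA hij,
      eq_univ_of_forall fun o => mem_biUnion.2 ((hall o).imp fun i hi => ⟨mem_univ i, hi⟩),
      card_univ, Fintype.card_fin]
  have hcard : #L + #R = n := by
    rw [card_filter_add_card_filter_not, card_univ, Fintype.card_fin]
  have hEF_right : ∀ i j, ∑ o ∈ A j, value o ≤ ∑ o ∈ A i, value o + 3 := fun i j =>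
    (hEF i j).sum_le_sum_add value_nonneg (by norm_num) fun o _ => value_le_three o
  have hEF_left : ∀ i, ∀ j ∈ L, ∑ o ∈ A j, value o ≤ ∑ o ∈ A i, value o + 2 := fun i j hj =>
    (hEF i j).sum_le_sum_add value_nonneg (by norm_num) fun o ho =>
      (value_of_mem_leftPart ((mem_filter.1 hj).2 ho)).le
  rcases le_or_gt #L 1 with hL | hL
  · obtain ⟨k, hk, hk3⟩ : ∃ k ∈ L, 2 < #(A k) :=
      exists_lt_of_sum_lt (by rw [sum_const, smul_eq_mul]; omega)
    obtain ⟨j, hj, hj1⟩ : ∃ j ∈ R, #(A j) < 2 :=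
      exists_lt_of_sum_lt (by rw [sum_const, smul_eq_mul]; omega)
    have h := hEF_left j k hk
    rw [sum_value_of_subset_leftPart (mem_filter.1 hk).2,
      sum_value_of_subset_rightPart (hR_sub j hj)] at h
    have hk3' : (3 : ℝ) ≤ #(A k) := by exact_mod_cast hk3
    have hj1' : (#(A j) : ℝ) ≤ 1 := by exact_mod_cast Nat.le_of_lt_succ hj1
    linarith
  · obtain ⟨p, hp, hp1⟩ : ∃ p ∈ L, #(A p) < 2 :=
      exists_lt_of_sum_lt (by rw [sum_const, smul_eq_mul]; omega)
    obtain ⟨j, hj, hj2⟩ : ∃ j ∈ R, 1 < #(A j) :=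
      exists_lt_of_sum_lt (by rw [sum_const, smul_eq_mul]; omega)
    have h := hEF_right p j
    rw [sum_value_of_subset_leftPart (mem_filter.1 hp).2,
      sum_value_of_subset_rightPart (hR_sub j hj)] at h
    have hp1' : (#(A p) : ℝ) ≤ 1 := by exact_mod_cast Nat.le_of_lt_succ hp1
    have hj2' : (2 : ℝ) ≤ #(A j) := by exact_mod_cast hj2
    linarith

end K3Conflict

open K3Conflict

/-- for n ≥ 4 agents and m = n + 2 items on the complete bipartite conflict
graph K_{3, n-1} (parts {0,1,2} and {3,...,n+1}), with identical additive valuation giving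
value 2 to the items of the left part and 3 to the others, no allocation is both maximal
and EF1. -/
theorem stmt_14 (n : ℕ) (hn : 4 ≤ n) :
    ¬ ∃ A : Fin n → Finset (Fin (n + 2)),
      (∀ i j : Fin n, i ≠ j → Disjoint (A i) (A j)) ∧
      (∀ i : Fin n, ∀ x ∈ A i, ∀ y ∈ A i,
        ¬ ((x.val < 3 ∧ 3 ≤ y.val) ∨ (y.val < 3 ∧ 3 ≤ x.val))) ∧
      (∀ o : Fin (n + 2), (∀ i : Fin n, o ∉ A i) → ∀ i : Fin n,
        ∃ x ∈ A i, ((o.val < 3 ∧ 3 ≤ x.val) ∨ (x.val < 3 ∧ 3 ≤ o.val))) ∧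
      (∀ i j : Fin n, ∃ S : Finset (Fin (n + 2)), S ⊆ A i ∪ A j ∧ S.card ≤ 1 ∧
        (∑ o ∈ A i \ S, (if o.val < 3 then (2 : ℝ) else 3)) ≥
          (∑ o ∈ A j \ S, (if o.val < 3 then (2 : ℝ) else 3))) := by
  rintro ⟨A, hdisj, hind, hmax, hEF⟩
  have hA : Pairwise (Disjoint on A) := fun i j => hdisj i j
  by_cases hall : ∀ o, ∃ i, o ∈ A i
  · exact false_of_envyFreeUpToOne_of_allocated (by omega) hA
      (fun i => subset_leftPart_or_subset_rightPart (hind i)) hall hEF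
  · obtain ⟨o, ho⟩ : ∃ o, ∀ i, o ∉ A i := by simpa using hall
    have h := card_le_of_forall_exists_adj hA o (hmax o ho)
    rw [Fintype.card_fin] at h
    omega
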